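/- Let G be a finitely generated subgroup of PL_o([a,c]), where a < c, and let χ : G → ℝ be a non-zero character. Assume G contains elements f and h with χ(f) > 0 and χ(h) > 0 that satisfy, for some δ > 0, one of the following two conditions: (i) f is linear on [a, a+δ] with slope < 1 and the support of h is contained in [a, a+δ]; or (ii) f is affine on [c−δ, c] with slope < 1 and the support of h is contained in [c−δ, c]. Then [χ] ∈ Σ¹(G). -/

import Mathlib

open Set

/-- A map `g : ℝ → ℝ` is *finitary piecewise linear* if there is a finite set of
breakpoints outside of which `g` is locally affine. -/
def IsFinitaryPL (g : ℝ → ℝ) : Prop :=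
  ∃ B : Finset ℝ, ∀ t : ℝ, t ∉ B →
    ∃ m b : ℝ, ∃ ε : ℝ, 0 < ε ∧ ∀ u : ℝ, |u - t| < ε → g u = m * u + b

/-- The support of a map of the real line. -/
def suppOf (g : ℝ → ℝ) : Set ℝ := {t : ℝ | g t ≠ t}

/-- `PLo I` is the set of orientation-preserving (i.e. strictly increasing) finitary
piecewise linear homeomorphisms of `ℝ` with support contained in `I`. -/
def PLo (I : Set ℝ) : Set (Equiv.Perm ℝ) :=
  {g : Equiv.Perm ℝ | StrictMono ⇑g ∧ IsFinitaryPL ⇑g ∧ suppOf ⇑g ⊆ I}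

/-- The right derivative of `g` at `a`. -/
noncomputable def rightSlope (g : ℝ → ℝ) (a : ℝ) : ℝ := derivWithin g (Ici a) a

/-- The left derivative of `g` at `c`. -/
noncomputable def leftSlope (g : ℝ → ℝ) (c : ℝ) : ℝ := derivWithin g (Iic c) c

/-- The amplitude of the translation with which `g` coincides near `+∞`. -/
noncomputable def amplTop (g : ℝ → ℝ) : ℝ :=
  Filter.limUnder Filter.atTop (fun t => g t - t)

/-- The amplitude of the translation with which `g` coincides near `-∞`. -/
noncomputable def amplBot (g : ℝ → ℝ) : ℝ :=
  Filter.limUnder Filter.atBot (fun t => g t - t)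

/-- A character of a group is a homomorphism into `(ℝ, +)`. -/
def IsChar {Γ : Type*} [Group Γ] (χ : Γ → ℝ) : Prop :=
  ∀ g h : Γ, χ (g * h) = χ g + χ h

/-- Two characters lie on the same ray: `ψ` is a positive multiple of `χ`. -/
def SameRayChar {Γ : Type*} (χ ψ : Γ → ℝ) : Prop :=
  ∃ r : ℝ, 0 < r ∧ ∀ g : Γ, ψ g = r * χ g

/-- The subgraph `Γ(G, X)_χ` of the Cayley graph of `G` with respect to the generating
set `X`, spanned by the vertices `g` with `χ g ≥ 0`, is connected. -/
def CayleyConnected {Γ : Type*} [Group Γ] (X : Set Γ) (χ : Γ → ℝ) : Prop :=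
  ∀ g h : Γ, 0 ≤ χ g → 0 ≤ χ h →
    Relation.ReflTransGen
      (fun u v : Γ => 0 ≤ χ u ∧ 0 ≤ χ v ∧ ∃ x ∈ X, v = u * x ∨ u = v * x) g h

/-- `[χ] ∈ Σ¹(G)`: for every generating set `X` of `G` the subgraph `Γ(G,X)_χ`
of the Cayley graph is connected. -/
def MemSigma1 {Γ : Type*} [Group Γ] (χ : Γ → ℝ) : Prop :=
  ∀ X : Set Γ, Subgroup.closure X = ⊤ → CayleyConnected X χ

/-- The character `χ_ℓ = ln ∘ σ_ℓ` of a subgroup `G` of `PL_o([a,c])`. -/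
noncomputable def chiL (G : Subgroup (Equiv.Perm ℝ)) (a : ℝ) : G → ℝ :=
  fun g => Real.log (rightSlope (⇑(g : Equiv.Perm ℝ)) a)

/-- The character `χ_r = ln ∘ σ_r` of a subgroup `G` of `PL_o([a,c])`. -/
noncomputable def chiR (G : Subgroup (Equiv.Perm ℝ)) (c : ℝ) : G → ℝ :=
  fun g => Real.log (leftSlope (⇑(g : Equiv.Perm ℝ)) c)

/-!
Slopes at `a` multiply under composition, so every commutator of `G` has slope `1` at `a` and is
the identity on some `[a, a + ε]`. The conjugate `f ^ k * h * f⁻¹ ^ k` is supported in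
`[a, a + m ^ k * δ]`, so for large `k` it commutes with that commutator. The end `c` is reduced to
the end `a` by conjugating with `t ↦ -t`.

Join `1` to `g` (with `χ g ≥ 0`) inside `Γ(G, X)_χ` along the word
`P · θ · P⁻¹ g P g⁻¹ · θ⁻¹ · g P⁻¹ = g`, where `P = y ^ n` is a power of a generator of positive
`χ`-value and `θ = f ^ k * h ^ R * f⁻¹ ^ k` commutes with `⁅P⁻¹, g⁆`. For `n` and `R` large,
`P` and `θ` lift the walk high enough that no subword leaves the half space `χ ≥ 0`.
-/

namespace IsChar

variable {Γ : Type*} [Group Γ] {χ : Γ → ℝ}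

lemma map_one (hχ : IsChar χ) : χ 1 = 0 := by
  simpa using hχ 1 1

lemma map_inv (hχ : IsChar χ) (x : Γ) : χ x⁻¹ = -χ x := by
  have := hχ x x⁻¹
  rw [mul_inv_cancel, hχ.map_one] at this
  linarith

lemma map_pow (hχ : IsChar χ) (x : Γ) (n : ℕ) : χ (x ^ n) = n * χ x := by
  induction n with
  | zero => simp [hχ.map_one]
  | succ n ih => rw [pow_succ, hχ, ih]; push_cast; ring

lemma eq_zero_of_closure_eq_top (hχ : IsChar χ) {X : Set Γ} (hX : Subgroup.closure X = ⊤)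
    (h0 : ∀ x ∈ X, χ x = 0) : χ = 0 := by
  funext g
  induction (hX ▸ Subgroup.mem_top g : g ∈ Subgroup.closure X) using Subgroup.closure_induction with
  | mem x hx => exact h0 x hx
  | one => exact hχ.map_one
  | mul x y _ _ hx hy => simp [hχ x y, hx, hy]
  | inv x _ hx => simp [hχ.map_inv, hx]

end IsChar

section Cayley

variable {Γ : Type*} [Group Γ] (X : Set Γ) (χ : Γ → ℝ)

def CayleyEdge (u v : Γ) : Prop :=
  0 ≤ χ u ∧ 0 ≤ χ v ∧ ∃ x ∈ X, v = u * x ∨ u = v * x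

instance : Std.Symm (CayleyEdge X χ) where
  symm := by
    rintro u v ⟨hu, hv, x, hx, h | h⟩
    exacts [⟨hv, hu, x, hx, Or.inr h⟩, ⟨hv, hu, x, hx, Or.inl h⟩]

def MovesAbove (b : ℝ) (x : Γ) : Prop :=
  ∀ u, b ≤ χ u → Relation.ReflTransGen (CayleyEdge X χ) u (u * x)

variable {X χ}

namespace MovesAbove

lemma mono {b b' : ℝ} {x : Γ} (hx : MovesAbove X χ b x) (hb : b ≤ b') : MovesAbove X χ b' x :=
  fun u hu => hx u (hb.trans hu)

lemma mul (hχ : IsChar χ) {b b' : ℝ} {x y : Γ} (hx : MovesAbove X χ b x)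
    (hy : MovesAbove X χ b' y) (hb : b' ≤ b + χ x) : MovesAbove X χ b (x * y) := fun u hu =>
  mul_assoc u x y ▸ (hx u hu).trans (hy (u * x) (by rw [hχ]; linarith))

lemma inv (hχ : IsChar χ) {b : ℝ} {x : Γ} (hx : MovesAbove X χ b x) :
    MovesAbove X χ (b + χ x) x⁻¹ := fun u hu => by
  have := hx (u * x⁻¹) (by rw [hχ, hχ.map_inv]; linarith)
  rw [inv_mul_cancel_right] at this
  exact Std.Symm.symm _ _ this

lemma pow (hχ : IsChar χ) {b : ℝ} {x : Γ} (hx : MovesAbove X χ b x) (hχx : 0 ≤ χ x) (n : ℕ) :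
    MovesAbove X χ b (x ^ n) := by
  induction n with
  | zero => exact fun u _ => by rw [pow_zero, mul_one]
  | succ n ih =>
    refine pow_succ x n ▸ ih.mul hχ hx ?_
    rw [hχ.map_pow]
    nlinarith

end MovesAbove

lemma movesAbove_of_mem (hχ : IsChar χ) {x : Γ} (hx : x ∈ X) :
    MovesAbove X χ (max 0 (-χ x)) x := fun u hu =>
  .single ⟨le_of_max_le_left hu, by rw [hχ]; linarith [le_max_right 0 (-χ x)], x, hx, .inl rfl⟩

lemma exists_movesAbove (hχ : IsChar χ) (hX : Subgroup.closure X = ⊤) (g : Γ) :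
    ∃ b, MovesAbove X χ b g := by
  induction (hX ▸ Subgroup.mem_top g : g ∈ Subgroup.closure X) using Subgroup.closure_induction with
  | mem x hx => exact ⟨_, movesAbove_of_mem hχ hx⟩
  | one => exact ⟨0, fun u _ => by rw [mul_one]⟩
  | mul x y _ _ hx hy =>
    obtain ⟨b, hx⟩ := hx
    obtain ⟨b', hy⟩ := hy
    exact ⟨max b (b' - χ x),
      (hx.mono (le_max_left _ _)).mul hχ hy (by linarith [le_max_right b (b' - χ x)])⟩
  | inv x _ hx =>
    obtain ⟨b, hx⟩ := hx
    exact ⟨_, hx.inv hχ⟩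

lemma exists_movesAbove_zero_pos (hχ : IsChar χ) (hX : Subgroup.closure X = ⊤) (hne : χ ≠ 0) :
    ∃ y, MovesAbove X χ 0 y ∧ 0 < χ y := by
  obtain ⟨x, hx, hχx⟩ : ∃ x ∈ X, χ x ≠ 0 := by
    by_contra! h
    exact hne (hχ.eq_zero_of_closure_eq_top hX h)
  rcases hχx.lt_or_gt with hneg | hpos
  · refine ⟨x⁻¹, ((movesAbove_of_mem hχ hx).inv hχ).mono ?_, by rw [hχ.map_inv]; linarith⟩
    rw [max_eq_right (by linarith)]
    linarith
  · exact ⟨x, by simpa [max_eq_left (neg_nonpos.2 hpos.le)] using movesAbove_of_mem hχ hx, hpos⟩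

end Cayley

open scoped commutatorElement in
lemma word_eq_of_commute_commutator {Γ : Type*} [Group Γ] {P F H g : Γ}
    (hc : Commute ⁅P⁻¹, g⁆ (F * H * F⁻¹)⁻¹) :
    P * F * H * F⁻¹ * P⁻¹ * g * P * g⁻¹ * F * H⁻¹ * F⁻¹ * g * P⁻¹ = g :=
  calc _ = P * (F * H * F⁻¹) * (⁅P⁻¹, g⁆ * (F * H * F⁻¹)⁻¹) * g * P⁻¹ := by
          simp only [commutatorElement_def]; group
    _ = g := by rw [hc.eq]; simp only [commutatorElement_def]; group

open scoped commutatorElement in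
theorem memSigma1_of_forall_commute_commutator {Γ : Type*} [Group Γ] {χ : Γ → ℝ}
    (hχ : IsChar χ) (hne : χ ≠ 0) {f h : Γ} (hf : 0 ≤ χ f) (hh : 0 < χ h)
    (hcomm : ∀ x y : Γ, ∃ k : ℕ, Commute ⁅x, y⁆ (f ^ k * h * (f ^ k)⁻¹)) :
    MemSigma1 χ := by
  intro X hX
  suffices hpath : ∀ g, 0 ≤ χ g → Relation.ReflTransGen (CayleyEdge X χ) 1 g from
    fun g₁ g₂ h₁ h₂ => (Std.Symm.symm _ _ (hpath g₁ h₁)).trans (hpath g₂ h₂)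
  intro g hg
  obtain ⟨y, hy, hχy⟩ := exists_movesAbove_zero_pos hχ hX hne
  obtain ⟨bf, hbf⟩ := exists_movesAbove hχ hX f
  obtain ⟨bh, hbh⟩ := exists_movesAbove hχ hX h
  obtain ⟨bg, hbg⟩ := exists_movesAbove hχ hX g
  obtain ⟨n, hn⟩ := exists_nat_gt (max bf (max bh bg) / χ y)
  obtain ⟨R, hR⟩ := exists_nat_gt (bg / χ h)
  rw [div_lt_iff₀ hχy, max_lt_iff, max_lt_iff] at hn
  rw [div_lt_iff₀ hh] at hR
  -- `P` lifts the walk high enough for `f`, `h` and `g`; `H` lifts it high enough for `g`.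
  set P := y ^ n
  set H := h ^ R
  obtain ⟨k, hk⟩ := hcomm P⁻¹ g
  set F := f ^ k
  have hP : χ P = n * χ y := hχ.map_pow y n
  have hH : χ H = R * χ h := hχ.map_pow h R
  have hH0 : 0 ≤ χ H := by rw [hH]; positivity
  have hF : 0 ≤ χ F := by rw [hχ.map_pow]; positivity
  have hmP : MovesAbove X χ 0 P := hy.pow hχ hχy.le n
  have hmF : MovesAbove X χ bf F := hbf.pow hχ hf k
  have hmH : MovesAbove X χ bh H := hbh.pow hχ hh.le R
  have hc : Commute ⁅P⁻¹, g⁆ (F * H * F⁻¹)⁻¹ := (conj_pow (a := F) ▸ hk.pow_right R).inv_right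
  clear_value P H F
  have hmoves :
      MovesAbove X χ 0 (P * F * H * F⁻¹ * P⁻¹ * g * P * g⁻¹ * F * H⁻¹ * F⁻¹ * g * P⁻¹) := by
    refine ((((((((((((hmP.mul hχ hmF ?_).mul hχ hmH ?_).mul hχ (hmF.inv hχ) ?_).mul hχ
      (hmP.inv hχ) ?_).mul hχ hbg ?_).mul hχ hmP ?_).mul hχ (hbg.inv hχ) ?_).mul hχ hmF ?_).mul
      hχ (hmH.inv hχ) ?_).mul hχ (hmF.inv hχ) ?_).mul hχ hbg ?_).mul hχ (hmP.inv hχ) ?_)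
    all_goals (try simp only [hχ _, hχ.map_inv]); linarith
  simpa [word_eq_of_commute_commutator hc] using hmoves 1 hχ.map_one.ge

open Filter Topology

section PiecewiseLinear

variable {a c : ℝ}

lemma continuous_of_mem_PLo {g : Equiv.Perm ℝ} {I : Set ℝ} (hg : g ∈ PLo I) : Continuous g :=
  hg.1.monotone.continuous_of_surjective g.surjective

lemma apply_left_eq_of_mem_PLo {g : Equiv.Perm ℝ} (hg : g ∈ PLo (Icc a c)) : g a = a := by
  have hfix : EqOn g id (Iio a) := fun t ht => by
    by_contra hne
    exact (hg.2.2 hne).1.not_gt ht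
  exact hfix.closure (continuous_of_mem_PLo hg) continuous_id
    (by rw [closure_Iio]; exact self_mem_Iic)

lemma exists_eqOn_affine_of_locally_affine {g : ℝ → ℝ} {s : Set ℝ} (hs : IsOpen s)
    (hs' : IsPreconnected s)
    (hloc : ∀ t ∈ s, ∃ m b : ℝ, ∀ᶠ u in 𝓝 t, g u = m * u + b) :
    ∃ m b : ℝ, EqOn g (fun t => m * t + b) s := by
  have hderiv : ∀ t ∈ s, ∀ᶠ u in 𝓝 t, HasDerivAt g (deriv g t) u := by
    intro t ht
    obtain ⟨m, b, hmb⟩ := hloc t ht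
    have haff (u : ℝ) : HasDerivAt (fun v => m * v + b) m u := by
      simpa using ((hasDerivAt_id u).const_mul m).add_const b
    have hm : ∀ᶠ u in 𝓝 t, HasDerivAt g m u :=
      hmb.eventually_nhds.mono fun u hu => (haff u).congr_of_eventuallyEq hu
    rwa [hm.self_of_nhds.deriv]
  have hD : ∀ t ∈ s, HasDerivAt (deriv g) 0 t := fun t ht =>
    (hasDerivAt_const t (deriv g t)).congr_of_eventuallyEq ((hderiv t ht).mono fun _ hu => hu.deriv)
  obtain ⟨m, hm⟩ := hs.exists_is_const_of_deriv_eq_zero hs'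
    (fun t ht => (hD t ht).differentiableAt.differentiableWithinAt) (fun t ht => (hD t ht).deriv)
  obtain ⟨b, hb⟩ := hs.exists_eq_add_of_deriv_eq hs'
    (fun t ht => (hderiv t ht).self_of_nhds.differentiableAt.differentiableWithinAt)
    (differentiable_id.const_mul m).differentiableOn (fun t ht => by simp [hm t ht])
  exact ⟨m, b, hb⟩

lemma exists_eventually_eq_affine_of_mem_PLo {g : Equiv.Perm ℝ} (hg : g ∈ PLo (Icc a c)) :
    ∃ s, 0 < s ∧ ∀ᶠ t in 𝓝[≥] a, g t = a + s * (t - a) := by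
  obtain ⟨B, hB⟩ := hg.2.1
  have hBc : ∀ᶠ t in 𝓝[>] a, t ∉ B := by
    have : ((B : Set ℝ) \ {a})ᶜ ∈ 𝓝 a := (B.finite_toSet.sdiff).isClosed.compl_mem_nhds (by simp)
    filter_upwards [nhdsWithin_le_nhds this, self_mem_nhdsWithin] with t h1 h2
    exact fun htB => h1 ⟨htB, h2.ne'⟩
  obtain ⟨q, hq : a < q, hqB⟩ := mem_nhdsGT_iff_exists_Ioo_subset.1 hBc
  obtain ⟨m, b, hmb⟩ :=
      exists_eqOn_affine_of_locally_affine isOpen_Ioo isPreconnected_Ioo fun t ht => by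
    obtain ⟨m, b, ε, hε, h⟩ := hB t (hqB ht)
    exact ⟨m, b, Metric.eventually_nhds_iff.2 ⟨ε, hε, fun u hu => h u (Real.dist_eq u t ▸ hu)⟩⟩
  have hga := apply_left_eq_of_mem_PLo hg
  have hanchor : m * a + b = a := by
    have hlim : Tendsto g (𝓝[>] a) (𝓝 (g a)) :=
      ((continuous_of_mem_PLo hg).tendsto a).mono_left nhdsWithin_le_nhds
    rw [hga] at hlim
    have haff : Tendsto (fun t => m * t + b) (𝓝[>] a) (𝓝 (m * a + b)) :=
      ((by fun_prop : Continuous fun t : ℝ => m * t + b).tendsto a).mono_left nhdsWithin_le_nhds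
    refine tendsto_nhds_unique haff (hlim.congr' ?_)
    filter_upwards [Ioo_mem_nhdsGT hq] with t ht using hmb ht
  have hm : 0 < m := by
    have := hg.1 (show a + (q - a) / 3 < a + 2 * (q - a) / 3 by linarith)
    rw [hmb ⟨by linarith, by linarith⟩, hmb ⟨by linarith, by linarith⟩] at this
    nlinarith
  refine ⟨m, hm, ?_⟩
  filter_upwards [Ico_mem_nhdsGE hq] with t ⟨hat, htq⟩
  rcases hat.eq_or_lt with rfl | hat
  · simp [hga]
  · rw [hmb ⟨hat, htq⟩]
    linarith

lemma rightSlope_eq_of_eventually_eq {g : ℝ → ℝ} {s : ℝ}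
    (hg : ∀ᶠ t in 𝓝[≥] a, g t = a + s * (t - a)) : rightSlope g a = s := by
  have haff : HasDerivWithinAt (fun t => a + s * (t - a)) s (Ici a) a := by
    simpa using (((hasDerivAt_id a).sub_const a).const_mul s).const_add a |>.hasDerivWithinAt
  have hga : g a = a := by simpa using hg.self_of_nhdsWithin self_mem_Ici
  exact (haff.congr_of_eventuallyEq hg (by simpa using hga)).derivWithin
    (uniqueDiffOn_Ici a a self_mem_Ici)

lemma eventually_eq_rightSlope_of_mem_PLo {g : Equiv.Perm ℝ} (hg : g ∈ PLo (Icc a c)) :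
    0 < rightSlope g a ∧ ∀ᶠ t in 𝓝[≥] a, g t = a + rightSlope g a * (t - a) := by
  obtain ⟨s, hs, hgs⟩ := exists_eventually_eq_affine_of_mem_PLo hg
  rw [rightSlope_eq_of_eventually_eq hgs]
  exact ⟨hs, hgs⟩

lemma eventually_comp_eq_affine {g g' : ℝ → ℝ} {s s' : ℝ} (hs' : 0 < s')
    (hg : ∀ᶠ t in 𝓝[≥] a, g t = a + s * (t - a)) (hg' : ∀ᶠ t in 𝓝[≥] a, g' t = a + s' * (t - a)) :
    ∀ᶠ t in 𝓝[≥] a, g (g' t) = a + s * s' * (t - a) := by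
  have haff : Tendsto (fun t => a + s' * (t - a)) (𝓝 a) (𝓝 a) := by
    simpa using (by fun_prop : Continuous fun t : ℝ => a + s' * (t - a)).tendsto a
  have htend : Tendsto g' (𝓝[≥] a) (𝓝[≥] a) := by
    refine tendsto_nhdsWithin_iff.2
      ⟨(haff.mono_left nhdsWithin_le_nhds).congr' (EventuallyEq.symm hg'), ?_⟩
    filter_upwards [hg', self_mem_nhdsWithin] with t ht hat
    rw [ht, mem_Ici]
    nlinarith [mem_Ici.1 hat]
  filter_upwards [htend.eventually hg, hg'] with t h1 h2
  rw [h1, h2]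
  ring

lemma rightSlope_mul_of_mem_PLo {g g' : Equiv.Perm ℝ} (hg : g ∈ PLo (Icc a c))
    (hg' : g' ∈ PLo (Icc a c)) : rightSlope ⇑(g * g') a = rightSlope g a * rightSlope g' a :=
  rightSlope_eq_of_eventually_eq <| eventually_comp_eq_affine (g := g) (g' := g')
    (eventually_eq_rightSlope_of_mem_PLo hg').1 (eventually_eq_rightSlope_of_mem_PLo hg).2
    (eventually_eq_rightSlope_of_mem_PLo hg').2

open scoped commutatorElement in
lemma eventually_commutator_apply_eq {G : Subgroup (Equiv.Perm ℝ)}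
    (hG : (G : Set (Equiv.Perm ℝ)) ⊆ PLo (Icc a c)) (x y : G) :
    ∀ᶠ t in 𝓝[≥] a, ((⁅x, y⁆ : G) : Equiv.Perm ℝ) t = t := by
  let σ : G →* ℝ :=
    { toFun u := rightSlope ⇑(u : Equiv.Perm ℝ) a
      map_one' := rightSlope_eq_of_eventually_eq (.of_forall fun t => by simp)
      map_mul' u v := rightSlope_mul_of_mem_PLo (hG u.2) (hG v.2) }
  have hσ : σ ⁅x, y⁆ = 1 := by
    calc σ ⁅x, y⁆ = σ (x * x⁻¹) * σ (y * y⁻¹) := by simp only [commutatorElement_def, map_mul]; ring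
      _ = 1 := by simp
  filter_upwards [(eventually_eq_rightSlope_of_mem_PLo (hG ⁅x, y⁆.2)).2] with t ht
  rw [ht, show rightSlope _ a = 1 from hσ]
  ring

lemma iterate_eq_of_eqOn_affine {φ : ℝ → ℝ} {δ m : ℝ} (hm0 : 0 ≤ m) (hm1 : m ≤ 1)
    (hφ : ∀ t ∈ Icc a (a + δ), φ t = a + m * (t - a)) (k : ℕ) :
    ∀ t ∈ Icc a (a + δ), φ^[k] t = a + m ^ k * (t - a) := by
  induction k with
  | zero => simp
  | succ k ih =>
    intro t ht
    have hmk : m ^ k * (t - a) ≤ t - a :=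
      mul_le_of_le_one_left (by linarith [ht.1]) (pow_le_one₀ hm0 hm1)
    have hmk0 : 0 ≤ m ^ k * (t - a) := mul_nonneg (pow_nonneg hm0 k) (by linarith [ht.1])
    rw [Function.iterate_succ_apply', ih t ht, hφ _ ⟨by linarith, by linarith [ht.2]⟩]
    ring

lemma suppOf_conj_subset (f h : Equiv.Perm ℝ) : suppOf ⇑(f * h * f⁻¹) ⊆ f '' suppOf h :=
  fun t ht => ⟨f⁻¹ t, fun hfix => ht (by simp only [Equiv.Perm.mul_apply, hfix]; simp), by simp⟩

open scoped commutatorElement in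
theorem exists_commute_commutator_conj_of_left {G : Subgroup (Equiv.Perm ℝ)}
    (hG : (G : Set (Equiv.Perm ℝ)) ⊆ PLo (Icc a c)) {f h : G} {δ m : ℝ} (hδ : 0 < δ) (hm : m < 1)
    (hf : ∀ t : ℝ, a ≤ t → t ≤ a + δ → (f : Equiv.Perm ℝ) t = a + m * (t - a))
    (hh : suppOf ⇑(h : Equiv.Perm ℝ) ⊆ Icc a (a + δ)) (x y : G) :
    ∃ k : ℕ, Commute ⁅x, y⁆ (f ^ k * h * (f ^ k)⁻¹) := by
  have hm0 : 0 < m := by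
    have := (hG f.2).1 (show a < a + δ by linarith)
    rw [hf a le_rfl (by linarith), hf (a + δ) (by linarith) le_rfl] at this
    nlinarith
  obtain ⟨u, hu : a < u, hfix⟩ :=
    mem_nhdsGE_iff_exists_Ico_subset.1 (eventually_commutator_apply_eq hG x y)
  obtain ⟨k, hk⟩ := exists_pow_lt_of_lt_one (div_pos (sub_pos.2 hu) hδ) hm
  rw [lt_div_iff₀ hδ] at hk
  refine ⟨k, Subtype.ext (Equiv.Perm.Disjoint.commute fun t => ?_).eq⟩
  by_cases ht : t ∈ suppOf ⇑((f ^ k * h * (f ^ k)⁻¹ : G) : Equiv.Perm ℝ)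
  · left
    simp only [Subgroup.coe_mul, Subgroup.coe_pow, Subgroup.coe_inv] at ht
    obtain ⟨ξ, hξ, rfl⟩ := suppOf_conj_subset _ _ ht
    have hξ' := hh hξ
    rw [Equiv.Perm.coe_pow,
      iterate_eq_of_eqOn_affine hm0.le hm.le (fun t ht => hf t ht.1 ht.2) k ξ hξ']
    refine hfix ⟨?_, ?_⟩
    · nlinarith [hξ'.1, pow_nonneg hm0.le k]
    · nlinarith [hξ'.2, pow_nonneg hm0.le k]
  · exact .inr (not_not.1 ht)

end PiecewiseLinear

section Reflection

variable {a c : ℝ}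

def negConj : Equiv.Perm ℝ ≃* Equiv.Perm ℝ := MulAut.conj (Equiv.neg ℝ)

lemma negConj_apply (g : Equiv.Perm ℝ) (t : ℝ) : negConj g t = -g (-t) := by
  simp [negConj, MulAut.conj_apply]

lemma IsFinitaryPL.neg_comp_neg {g : ℝ → ℝ} (hg : IsFinitaryPL g) :
    IsFinitaryPL fun t => -g (-t) := by
  classical
  obtain ⟨B, hB⟩ := hg
  refine ⟨B.image Neg.neg, fun t ht => ?_⟩
  obtain ⟨m, b, ε, hε, h⟩ := hB (-t) fun h => ht (Finset.mem_image.2 ⟨-t, h, neg_neg t⟩)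
  refine ⟨m, -b, ε, hε, fun u hu => ?_⟩
  show -g (-u) = _
  rw [h (-u) (by rwa [show -u - -t = -(u - t) by ring, abs_neg])]
  ring

lemma negConj_mem_PLo {g : Equiv.Perm ℝ} (hg : g ∈ PLo (Icc a c)) :
    negConj g ∈ PLo (Icc (-c) (-a)) := by
  obtain ⟨hmono, hpl, hsupp⟩ := hg
  refine ⟨fun t u htu => ?_, ?_, fun t ht => ?_⟩
  · simpa [negConj_apply] using hmono (neg_lt_neg htu)
  · simpa [IsFinitaryPL, negConj_apply] using hpl.neg_comp_neg
  · have := hsupp (show g (-t) ≠ -t from fun h => ht (by simp [negConj_apply, h]))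
    exact ⟨by linarith [this.2], by linarith [this.1]⟩

open scoped commutatorElement in
theorem exists_commute_commutator_conj_of_right {G : Subgroup (Equiv.Perm ℝ)}
    (hG : (G : Set (Equiv.Perm ℝ)) ⊆ PLo (Icc a c)) {f h : G} {δ m b : ℝ} (hδ : 0 < δ) (hm : m < 1)
    (hf : ∀ t : ℝ, c - δ ≤ t → t ≤ c → (f : Equiv.Perm ℝ) t = m * t + b)
    (hh : suppOf ⇑(h : Equiv.Perm ℝ) ⊆ Icc (c - δ) c) (x y : G) :
    ∃ k : ℕ, Commute ⁅x, y⁆ (f ^ k * h * (f ^ k)⁻¹) := by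
  let e := negConj.subgroupMap G
  have hG' : (G.map (negConj : Equiv.Perm ℝ →* Equiv.Perm ℝ) : Set (Equiv.Perm ℝ)) ⊆
      PLo (Icc (-c) (-a)) := by
    rintro _ ⟨g, hg, rfl⟩
    exact negConj_mem_PLo (hG hg)
  have hfc : (f : Equiv.Perm ℝ) c = m * c + b := hf c (by linarith) le_rfl
  have hcc := apply_left_eq_of_mem_PLo (negConj_mem_PLo (hG f.2))
  rw [negConj_apply, neg_neg, neg_inj] at hcc
  have hf' (t : ℝ) (h1 : -c ≤ t) (h2 : t ≤ -c + δ) :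
      (e f : Equiv.Perm ℝ) t = -c + m * (t - -c) := by
    simp only [e, MulEquiv.coe_subgroupMap_apply, negConj_apply]
    rw [hf (-t) (by linarith) (by linarith)]
    linarith
  have hh' : suppOf ⇑(e h : Equiv.Perm ℝ) ⊆ Icc (-c) (-c + δ) := fun t ht => by
    simp only [e, MulEquiv.coe_subgroupMap_apply] at ht
    have := hh (show (h : Equiv.Perm ℝ) (-t) ≠ -t from fun h' => ht (by simp [negConj_apply, h']))
    exact ⟨by linarith [this.2], by linarith [this.1]⟩
  obtain ⟨k, hk⟩ := exists_commute_commutator_conj_of_left hG' hδ hm hf' hh' (e x) (e y)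
  exact ⟨k, by simpa [map_commutatorElement] using hk.map e.symm⟩

end Reflection

theorem memSigma1_of_f_h_general
    (a c : ℝ)
    (G : Subgroup (Equiv.Perm ℝ)) (hG : (G : Set (Equiv.Perm ℝ)) ⊆ PLo (Icc a c))
    (χ : G → ℝ) (hχ : IsChar χ) (hne : χ ≠ 0)
    (f h : G) (hf : 0 < χ f) (hh : 0 < χ h)
    (δ : ℝ) (hδ : 0 < δ)
    (hcond :
      ((∃ m : ℝ, m < 1 ∧ ∀ t : ℝ, a ≤ t → t ≤ a + δ →
          (f : Equiv.Perm ℝ) t = a + m * (t - a)) ∧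
        suppOf (⇑(h : Equiv.Perm ℝ)) ⊆ Icc a (a + δ)) ∨
      ((∃ m b : ℝ, m < 1 ∧ ∀ t : ℝ, c - δ ≤ t → t ≤ c →
          (f : Equiv.Perm ℝ) t = m * t + b) ∧
        suppOf (⇑(h : Equiv.Perm ℝ)) ⊆ Icc (c - δ) c)) :
    MemSigma1 χ := by
  refine memSigma1_of_forall_commute_commutator hχ hne hf.le hh ?_
  rcases hcond with ⟨⟨m, hm, hfm⟩, hsupp⟩ | ⟨⟨m, b, hm, hfm⟩, hsupp⟩
  · exact exists_commute_commutator_conj_of_left hG hδ hm hfm hsupp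
  · exact exists_commute_commutator_conj_of_right hG hδ hm hfm hsupp

/-- **Lemma (Statement 9).** Let `G ≤ PL_o([a,c])` be finitely generated and `χ` a
non-zero character of `G`. If `G` contains `f`, `h` with positive `χ`-values such
that, for some `δ > 0`, either `f` is linear on `[a,a+δ]` with slope `< 1` and
`supp h ⊆ [a,a+δ]`, or `f` is affine on `[c−δ,c]` with slope `< 1` and
`supp h ⊆ [c−δ,c]`, then `[χ] ∈ Σ¹(G)`. -/
theorem memSigma1_of_f_h
    (a c : ℝ) (hac : a < c)
    (G : Subgroup (Equiv.Perm ℝ)) (hG : (G : Set (Equiv.Perm ℝ)) ⊆ PLo (Icc a c))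
    (hfg : G.FG)
    (χ : G → ℝ) (hχ : IsChar χ) (hne : χ ≠ 0)
    (f h : G) (hf : 0 < χ f) (hh : 0 < χ h)
    (δ : ℝ) (hδ : 0 < δ)
    (hcond :
      ((∃ m : ℝ, m < 1 ∧ ∀ t : ℝ, a ≤ t → t ≤ a + δ →
          (f : Equiv.Perm ℝ) t = a + m * (t - a)) ∧
        suppOf (⇑(h : Equiv.Perm ℝ)) ⊆ Icc a (a + δ)) ∨
      ((∃ m b : ℝ, m < 1 ∧ ∀ t : ℝ, c - δ ≤ t → t ≤ c →
          (f : Equiv.Perm ℝ) t = m * t + b) ∧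
        suppOf (⇑(h : Equiv.Perm ℝ)) ⊆ Icc (c - δ) c)) :
    MemSigma1 χ :=
  memSigma1_of_f_h_general a c G hG χ hχ hne f h hf hh δ hδ hcond
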